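/- arXiv:2005.11051 — 3 statements merged into one kernel-verified Lean document; each statement's English description precedes it below -/
import Mathlib

section
/- Let (G,p,q) be a generic linearly constrained framework in ℝ^d, where G = (V,E,L) is a looped simple graph. Suppose v ∈ V is a vertex and ℓ ∈ L is a loop incident to v such that rank R(G,p,q) = rank R(G − ℓ, p, q). Then ṗ(v) = 0 for every infinitesimal motion ṗ of (G,p,q). -/
/-- The row of the bar-joint rigidity matrix in `ℝ^d` corresponding to an (unordered) edge:
for the edge `{u,v}` it has `p u - p v` in the columns of `u`, `p v - p u` in the columns
of `v`, and zeros elsewhere. -/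
noncomputable def edgeRow {V : Type*} [DecidableEq V] (d : ℕ) (p : V → Fin d → ℝ) :
    Sym2 V → (V × Fin d → ℝ) :=
  Sym2.lift ⟨fun u v x =>
      (if x.1 = u then p u x.2 - p v x.2 else 0) +
      (if x.1 = v then p v x.2 - p u x.2 else 0),
    fun u v => funext fun x => add_comm _ _⟩

/-- A looped simple graph: a simple graph together with a family of loops, each loop
incident to a single vertex (a vertex may carry several loops). `Λ` indexes the loops. -/
structure LoopedGraph (V : Type*) (Λ : Type*) where
  graph : SimpleGraph V
  loopAt : Λ → V

/-- The rigidity matrix of a linearly constrained framework `(G,p,q)` in `ℝ^d`. -/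
noncomputable def lcRigidityMatrix {V Λ : Type*} [DecidableEq V] (d : ℕ)
    (G : LoopedGraph V Λ) (p : V → Fin d → ℝ) (q : Λ → Fin d → ℝ) :
    Matrix (↥G.graph.edgeSet ⊕ Λ) (V × Fin d) ℝ :=
  Matrix.of fun r x =>
    match r with
    | Sum.inl e => edgeRow d p e.1 x
    | Sum.inr j => if x.1 = G.loopAt j then q j x.2 else 0

/-- `(p,q)` is generic if the coordinates of `p` and `q` together are algebraically
independent over `ℚ`. -/
def GenericPQ {V Λ : Type*} (d : ℕ) (p : V → Fin d → ℝ) (q : Λ → Fin d → ℝ) : Prop :=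
  AlgebraicIndependent ℚ
    (Sum.elim (fun x : V × Fin d => p x.1 x.2) (fun y : Λ × Fin d => q y.1 y.2))

/-!
The rows of `R(G - ℓ)` have entries in the field `F` generated over `ℚ` by all coordinates
except those of `q(ℓ)`, and the rank hypothesis gives `ker R(G) = ker R(G - ℓ)`, so this
kernel is defined over `F`: writing a motion coordinatewise in an `F`-basis of `ℝ`, each
component is again a motion, now with values in `F`. The row of `ℓ` then reads
`∑ₖ q(ℓ)ₖ ṗ(v)ₖ = 0` with coefficients in `F`, and by genericity the coordinates of
`q(ℓ)` are algebraically, hence linearly, independent over `F`.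
-/

open Function Matrix

namespace Matrix

variable {m m' n K : Type*} [Fintype n]

theorem mulVec_eq_zero_of_rank_submatrix_eq [Field K] (A : Matrix m n K) (f : m' → m)
    (hrank : A.rank = (A.submatrix f id).rank) {x : n → K}
    (hx : A.submatrix f id *ᵥ x = 0) : A *ᵥ x = 0 := by
  have hle : LinearMap.ker A.mulVecLin ≤ LinearMap.ker (A.submatrix f id).mulVecLin :=
    fun y (hy : A *ᵥ y = 0) => funext fun r => congrFun hy (f r)
  have hdim := (LinearMap.finrank_range_add_finrank_ker A.mulVecLin).trans
    (LinearMap.finrank_range_add_finrank_ker (A.submatrix f id).mulVecLin).symm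
  have hker := Submodule.eq_of_le_of_finrank_le hle (by unfold rank at hrank; omega)
  exact (hker ▸ hx : x ∈ LinearMap.ker A.mulVecLin)

theorem mulVec_basis_repr_eq_zero [CommSemiring K] {L ι : Type*} [Semiring L] [Algebra K L]
    (A : Matrix m n K) (b : Module.Basis ι K L) {x : n → L}
    (hx : A.map (algebraMap K L) *ᵥ x = 0) (i : ι) :
    A *ᵥ (fun j => b.repr (x j) i) = 0 := by
  funext r
  have hr : ∑ j, A r j • x j = 0 := by
    simpa only [mulVec, dotProduct, map_apply, Pi.zero_apply, Algebra.smul_def] using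
      congrFun hx r
  show ∑ j, A r j * b.repr (x j) i = 0
  simpa only [map_sum, map_smul, Finsupp.finsetSum_apply, Finsupp.smul_apply, smul_eq_mul,
    map_zero, Finsupp.zero_apply] using congrArg (fun y => b.repr y i) hr

theorem mulVec_algebraMap_basis_repr_eq_zero [Field K] {L ι : Type*} [Field L] [Algebra K L]
    (M : Matrix m n L) (f : m' → m) (A : Matrix m' n K)
    (hA : A.map (algebraMap K L) = M.submatrix f id) (hrank : M.rank = (M.submatrix f id).rank)
    (b : Module.Basis ι K L) {x : n → L} (hx : M *ᵥ x = 0) (i : ι) :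
    M *ᵥ (fun j => algebraMap K L (b.repr (x j) i)) = 0 := by
  have hAx : A.map (algebraMap K L) *ᵥ x = 0 := hA ▸ funext fun r => congrFun hx (f r)
  refine M.mulVec_eq_zero_of_rank_submatrix_eq f hrank (funext fun r => ?_)
  rw [← hA]
  exact (RingHom.map_mulVec _ A _ r).symm.trans
    (by rw [mulVec_basis_repr_eq_zero A b hAx i, Pi.zero_apply, map_zero, Pi.zero_apply])

end Matrix

theorem AlgebraicIndependent.linearIndependent_comp_adjoin_compl {ι κ K L : Type*} [Field K]
    [Field L] [Algebra K L] {x : ι → L} (hx : AlgebraicIndependent K x) {e : κ → ι}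
    (he : Injective e) :
    LinearIndependent (IntermediateField.adjoin K (x '' (Set.range e)ᶜ)) (x ∘ e) :=
  (IntermediateField.algebraicIndependent_adjoin_iff.mpr
    ((hx.adjoin_of_disjoint disjoint_compl_left).comp _
      (Set.rangeFactorization_injective.mpr he))).linearIndependent

section Framework

variable {V Λ : Type*} [DecidableEq V] {d : ℕ}

theorem edgeRow_mem {S : Type*} [SetLike S ℝ] [AddSubgroupClass S ℝ] {s : S}
    {p : V → Fin d → ℝ} (hp : ∀ u k, p u k ∈ s) (e : Sym2 V) (c : V × Fin d) :
    edgeRow d p e c ∈ s := by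
  induction e using Sym2.ind with
  | _ u w =>
    refine add_mem ?_ ?_ <;> split_ifs <;>
      first
        | exact sub_mem (hp _ _) (hp _ _)
        | exact zero_mem s

theorem lcRigidityMatrix_submatrix_mem {S : Type*} [SetLike S ℝ] [AddSubgroupClass S ℝ]
    {s : S} {G : LoopedGraph V Λ} {p : V → Fin d → ℝ} {q : Λ → Fin d → ℝ} {ℓ : Λ}
    (hp : ∀ u k, p u k ∈ s) (hq : ∀ j ≠ ℓ, ∀ k, q j k ∈ s)
    (r : G.graph.edgeSet ⊕ {j : Λ // j ≠ ℓ}) (c : V × Fin d) :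
    (lcRigidityMatrix d G p q).submatrix (Sum.map id Subtype.val) id r c ∈ s := by
  rcases r with e | ⟨j, hj⟩
  · exact edgeRow_mem hp e c
  · show (if c.1 = G.loopAt j then q j c.2 else 0) ∈ s
    split_ifs
    · exact hq j hj c.2
    · exact zero_mem s

theorem lcRigidityMatrix_mulVec_inr [Fintype V] (G : LoopedGraph V Λ) (p : V → Fin d → ℝ)
    (q : Λ → Fin d → ℝ) (y : V × Fin d → ℝ) (j : Λ) :
    (lcRigidityMatrix d G p q *ᵥ y) (Sum.inr j) = ∑ k, q j k * y (G.loopAt j, k) := by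
  simp only [Matrix.mulVec, dotProduct, lcRigidityMatrix, Matrix.of_apply, ite_mul, zero_mul,
    Fintype.sum_prod_type, Finset.sum_ite_irrel, Finset.sum_const_zero, Finset.sum_ite_eq',
    Finset.mem_univ, if_true]

end Framework

theorem motion_fixes_vertex_of_rank_eq_general {V Λ : Type} [Fintype V] [DecidableEq V]
    (d : ℕ)
    (G : LoopedGraph V Λ) (p : V → Fin d → ℝ) (q : Λ → Fin d → ℝ)
    (hgen : GenericPQ d p q) (v : V) (ℓ : Λ) (hℓ : G.loopAt ℓ = v)
    (hrank : (lcRigidityMatrix d G p q).rank =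
      ((lcRigidityMatrix d G p q).submatrix
        (Sum.map id (Subtype.val : {j : Λ // j ≠ ℓ} → Λ)) id).rank)
    (pdot : V → Fin d → ℝ)
    (hmotion : (lcRigidityMatrix d G p q).mulVec (fun x => pdot x.1 x.2) = 0) :
    pdot v = 0 := by
  let f := Sum.elim (fun x : V × Fin d => p x.1 x.2) (fun y : Λ × Fin d => q y.1 y.2)
  let e : Fin d → (V × Fin d) ⊕ (Λ × Fin d) := fun k => Sum.inr (ℓ, k)
  set F := IntermediateField.adjoin ℚ (f '' (Set.range e)ᶜ)
  have hindep : LinearIndependent F (q ℓ) :=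
    hgen.linearIndependent_comp_adjoin_compl fun k k' h => by simpa [e] using h
  have hcoord : ∀ i ∉ Set.range e, f i ∈ F := fun i hi =>
    IntermediateField.subset_adjoin _ _ ⟨i, hi, rfl⟩
  have hB := lcRigidityMatrix_submatrix_mem (G := G) (p := p) (q := q) (ℓ := ℓ) (s := F)
    (fun u k => hcoord (Sum.inl (u, k)) (by rintro ⟨_, ⟨⟩⟩))
    (fun j hj k => hcoord (Sum.inr (j, k)) (by rintro ⟨_, h⟩; simp_all [e]))
  let b := Module.Basis.ofVectorSpace F ℝ
  have hcomp : ∀ i k, b.repr (pdot v k) i = 0 := by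
    intro i
    have hw := Matrix.mulVec_algebraMap_basis_repr_eq_zero _ _ (fun r c => ⟨_, hB r c⟩) rfl
      hrank b hmotion i
    have hloop := hw ▸ lcRigidityMatrix_mulVec_inr G p q _ ℓ
    rw [hℓ] at hloop
    refine Fintype.linearIndependent_iff.mp hindep (fun k => b.repr (pdot v k) i) ?_
    simpa [mul_comm, Algebra.smul_def] using hloop.symm
  funext k
  simpa using b.ext_elem_iff.mpr fun i => (hcomp i k).trans (by simp)

/-- Let `(G,p,q)` be a generic linearly constrained framework in `ℝ^d`,
`v` a vertex of `G` and `ℓ` a loop incident to `v` with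
`rank R(G,p,q) = rank R(G-ℓ,p,q)`.  Then `ṗ(v) = 0` for every infinitesimal motion `ṗ`
of `(G,p,q)`. -/
theorem motion_fixes_vertex_of_rank_eq {V Λ : Type} [Fintype V] [DecidableEq V]
    [Fintype Λ] (d : ℕ)
    (G : LoopedGraph V Λ) (p : V → Fin d → ℝ) (q : Λ → Fin d → ℝ)
    (hgen : GenericPQ d p q) (v : V) (ℓ : Λ) (hℓ : G.loopAt ℓ = v)
    (hrank : (lcRigidityMatrix d G p q).rank =
      ((lcRigidityMatrix d G p q).submatrix
        (Sum.map id (Subtype.val : {j : Λ // j ≠ ℓ} → Λ)) id).rank)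
    (pdot : V → Fin d → ℝ)
    (hmotion : (lcRigidityMatrix d G p q).mulVec (fun x => pdot x.1 x.2) = 0) :
    pdot v = 0 :=
  motion_fixes_vertex_of_rank_eq_general d G p q hgen v ℓ hℓ hrank pdot hmotion
end

section
/- Let d ≥ 1, let G = (V,E,L) be a d-sparse looped simple graph, and let H be an induced subgraph of G on vertex set W ⊆ V which is d-tight. Let G' be the looped simple graph obtained from G by deleting all edges and loops of H and adding d loops at each vertex of W. Then G' is d-sparse. Moreover, if G is K_{d+2}-free then so is G'. -/
/-- `i(X)`: the number of edges and loops of a looped simple graph induced by `X`. -/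
noncomputable def inducedCount {V Λ : Type*} (G : LoopedGraph V Λ) (X : Set V) : ℕ :=
  {e ∈ G.graph.edgeSet | ∀ v ∈ e, v ∈ X}.ncard + {j : Λ | G.loopAt j ∈ X}.ncard

/-- A looped simple graph is `k`-sparse if `i(X) ≤ k|X|` for all `X ⊆ V`. -/
def LCSparse {V Λ : Type*} (k : ℕ) (G : LoopedGraph V Λ) : Prop :=
  ∀ X : Set V, inducedCount G X ≤ k * X.ncard

namespace LoopedGraph

variable {V Λ : Type*} (G : LoopedGraph V Λ)

def edgesIn (X : Set V) : Set (Sym2 V) := {e ∈ G.graph.edgeSet | ∀ v ∈ e, v ∈ X}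

def loopsIn (X : Set V) : Set Λ := G.loopAt ⁻¹' X

lemma inducedCount_eq (X : Set V) :
    inducedCount G X = (G.edgesIn X).ncard + (G.loopsIn X).ncard := rfl

lemma edgesIn_mono : Monotone G.edgesIn :=
  fun _ _ hXY _ ⟨he, hX⟩ => ⟨he, fun v hv => hXY (hX v hv)⟩

lemma edgesIn_inter (X Y : Set V) : G.edgesIn (X ∩ Y) = G.edgesIn X ∩ G.edgesIn Y := by
  ext e
  simp only [edgesIn, Set.mem_inter_iff, Set.mem_sep_iff]
  exact ⟨fun ⟨he, h⟩ => ⟨⟨he, fun v hv => (h v hv).1⟩, he, fun v hv => (h v hv).2⟩,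
    fun ⟨⟨he, hX⟩, _, hY⟩ => ⟨he, fun v hv => ⟨hX v hv, hY v hv⟩⟩⟩

lemma inducedCount_add_inducedCount_le_union_add_inter [Finite V] [Finite Λ] (X Y : Set V) :
    inducedCount G X + inducedCount G Y ≤
      inducedCount G (X ∪ Y) + inducedCount G (X ∩ Y) := by
  have hedges : (G.edgesIn X ∪ G.edgesIn Y).ncard ≤ (G.edgesIn (X ∪ Y)).ncard :=
    Set.ncard_le_ncard <| Set.union_subset (G.edgesIn_mono Set.subset_union_left)
      (G.edgesIn_mono Set.subset_union_right)
  have hE := Set.ncard_union_add_ncard_inter (G.edgesIn X) (G.edgesIn Y)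
  have hL := Set.ncard_union_add_ncard_inter (G.loopsIn X) (G.loopsIn Y)
  rw [← edgesIn_inter] at hE
  simp only [loopsIn, ← Set.preimage_union, ← Set.preimage_inter] at hL
  simp only [inducedCount_eq, loopsIn]
  omega

lemma inducedCount_add_mul_ncard_inter_le_of_tight [Finite V] [Finite Λ] {d : ℕ}
    (hG : LCSparse d G) {W : Set V} (htight : inducedCount G W = d * W.ncard) (X : Set V) :
    inducedCount G X + d * (X ∩ W).ncard ≤ d * X.ncard + inducedCount G (X ∩ W) := by
  have hsuper := G.inducedCount_add_inducedCount_le_union_add_inter X W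
  have hunion := hG (X ∪ W)
  have hcard : d * (X ∪ W).ncard + d * (X ∩ W).ncard = d * X.ncard + d * W.ncard := by
    rw [← mul_add, ← mul_add, Set.ncard_union_add_ncard_inter]
  omega

section Replacement

variable {W : Set V}

lemma edgesIn_eq_diff_of_adj_iff {Λ' : Type*} {G' : LoopedGraph V Λ'}
    (hadj : ∀ a b : V, G'.graph.Adj a b ↔ (G.graph.Adj a b ∧ ¬ (a ∈ W ∧ b ∈ W)))
    (X : Set V) : G'.edgesIn X = G.edgesIn X \ G.edgesIn (X ∩ W) := by
  ext e
  induction e using Sym2.ind with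
  | _ a b =>
    simp only [edgesIn, Set.mem_sep_iff, Set.mem_sdiff, SimpleGraph.mem_edgeSet, hadj,
      Sym2.mem_iff, Set.mem_inter_iff, forall_eq_or_imp, forall_eq]
    tauto

lemma ncard_loopsIn_replace [Finite V] [Finite Λ] {d : ℕ}
    {G' : LoopedGraph V ({j : Λ // G.loopAt j ∉ W} ⊕ (W × Fin d))}
    (hloop : G'.loopAt = Sum.elim (fun j : {j : Λ // G.loopAt j ∉ W} => G.loopAt j.1)
      (fun z : W × Fin d => z.1.1)) (X : Set V) :
    (G'.loopsIn X).ncard = (G.loopsIn (X \ W)).ncard + d * (X ∩ W).ncard := by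
  have hkept : Subtype.val '' ((fun j : {j : Λ // G.loopAt j ∉ W} => G.loopAt j.1) ⁻¹' X) =
      G.loopsIn (X \ W) := by
    ext j
    simp only [Set.mem_image, Set.mem_preimage, Subtype.exists, exists_and_right,
      exists_eq_right, loopsIn, Set.mem_sdiff]
    tauto
  have hnew : (fun z : W × Fin d => z.1.1) ⁻¹' X = (Subtype.val ⁻¹' X) ×ˢ Set.univ := by
    ext; simp
  rw [loopsIn, hloop, Set.preimage_sumElim, Set.ncard_union_eq Set.disjoint_image_inl_image_inr,
    Set.ncard_image_of_injective _ Sum.inl_injective,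
    Set.ncard_image_of_injective _ Sum.inr_injective,
    ← Set.ncard_image_of_injective _ Subtype.val_injective, hkept, hnew, Set.ncard_prod,
    ← Set.ncard_image_of_injective _ Subtype.val_injective, Subtype.image_preimage_coe,
    Set.ncard_univ, Nat.card_fin, Set.inter_comm, mul_comm]

lemma inducedCount_replace_add_inducedCount_inter [Finite V] [Finite Λ] {d : ℕ}
    {G' : LoopedGraph V ({j : Λ // G.loopAt j ∉ W} ⊕ (W × Fin d))}
    (hadj : ∀ a b : V, G'.graph.Adj a b ↔ (G.graph.Adj a b ∧ ¬ (a ∈ W ∧ b ∈ W)))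
    (hloop : G'.loopAt = Sum.elim (fun j : {j : Λ // G.loopAt j ∉ W} => G.loopAt j.1)
      (fun z : W × Fin d => z.1.1)) (X : Set V) :
    inducedCount G' X + inducedCount G (X ∩ W) = inducedCount G X + d * (X ∩ W).ncard := by
  have hE := Set.ncard_sdiff_add_ncard_of_subset <|
    G.edgesIn_mono (Set.inter_subset_left (s := X) (t := W))
  have hL := Set.ncard_inter_add_ncard_sdiff_eq_ncard (G.loopsIn X) (G.loopsIn W)
  simp only [loopsIn, ← Set.preimage_inter, ← Set.preimage_sdiff] at hL
  rw [inducedCount_eq, inducedCount_eq, inducedCount_eq, G.edgesIn_eq_diff_of_adj_iff hadj,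
    G.ncard_loopsIn_replace hloop]
  simp only [loopsIn]
  omega

end Replacement

end LoopedGraph

theorem tight_subgraph_replacement_sparse_general {V Λ : Type} [Fintype V] [Fintype Λ]
    (d : ℕ) (G : LoopedGraph V Λ) (hG : LCSparse d G)
    (W : Set V) (htight : inducedCount G W = d * W.ncard)
    (G' : LoopedGraph V ({j : Λ // G.loopAt j ∉ W} ⊕ (↥W × Fin d)))
    (hadj : ∀ a b : V, G'.graph.Adj a b ↔ (G.graph.Adj a b ∧ ¬ (a ∈ W ∧ b ∈ W)))
    (hloop : G'.loopAt = Sum.elim (fun j => G.loopAt j.1) (fun z => z.1.1)) :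
    LCSparse d G' ∧ (G.graph.CliqueFree (d + 2) → G'.graph.CliqueFree (d + 2)) := by
  refine ⟨fun X => ?_, fun hfree => hfree.anti fun a b hab => ((hadj a b).1 hab).1⟩
  have hcount := G.inducedCount_replace_add_inducedCount_inter hadj hloop X
  have hbound := G.inducedCount_add_mul_ncard_inter_le_of_tight hG htight X
  omega

/-- Let `G` be a `d`-sparse looped simple graph and `H` the induced
subgraph of `G` on `W ⊆ V`, assumed `d`-tight (i.e. `i(W) = d|W|`).  Let `G'` be the
looped simple graph obtained from `G` by deleting all edges and loops of `H` and adding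
`d` loops at each vertex of `W`.  Then `G'` is `d`-sparse, and if `G` is `K_{d+2}`-free
then so is `G'`. -/
theorem tight_subgraph_replacement_sparse {V Λ : Type} [Fintype V] [Fintype Λ]
    (d : ℕ) (hd : 1 ≤ d) (G : LoopedGraph V Λ) (hG : LCSparse d G)
    (W : Set V) (htight : inducedCount G W = d * W.ncard)
    (G' : LoopedGraph V ({j : Λ // G.loopAt j ∉ W} ⊕ (↥W × Fin d)))
    (hadj : ∀ a b : V, G'.graph.Adj a b ↔ (G.graph.Adj a b ∧ ¬ (a ∈ W ∧ b ∈ W)))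
    (hloop : G'.loopAt = Sum.elim (fun j => G.loopAt j.1) (fun z => z.1.1)) :
    LCSparse d G' ∧ (G.graph.CliqueFree (d + 2) → G'.graph.CliqueFree (d + 2)) :=
  tight_subgraph_replacement_sparse_general d G hG W htight G' hadj hloop
end

section
/- Let d ≥ 1 and let G = (V,E,L) be a looped simple graph containing, as a subgraph on a vertex set W ⊆ V, a looped simple graph H that is minimally rigid in ℝ^d (i.e. independent and rigid in ℝ^d). Let H' be another looped simple graph on the same vertex set W that is minimally rigid in ℝ^d, and let G' be obtained from G by deleting the edges and loops of H and adding those of H' (assuming this does not create parallel edges or repeated loops). Then G is independent in ℝ^d if and only if G' is independent in ℝ^d. -/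
/-- A looped simple graph is independent in `ℝ^d` if the rows of its rigidity matrix are
linearly independent for every generic `(p,q)`. -/
def LCIndependent {V Λ : Type*} [DecidableEq V] (d : ℕ) (G : LoopedGraph V Λ) : Prop :=
  ∀ (p : V → Fin d → ℝ) (q : Λ → Fin d → ℝ), GenericPQ d p q →
    LinearIndependent ℝ (fun r => lcRigidityMatrix d G p q r)

/-- A looped simple graph is rigid in `ℝ^d` if its rigidity matrix has rank `d|V|` for
every generic `(p,q)`. -/
def LCRigid {V Λ : Type*} [Fintype V] [DecidableEq V] (d : ℕ) (G : LoopedGraph V Λ) : Prop :=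
  ∀ (p : V → Fin d → ℝ) (q : Λ → Fin d → ℝ), GenericPQ d p q →
    (lcRigidityMatrix d G p q).rank = d * Fintype.card V

/-- A looped simple graph is minimally rigid in `ℝ^d` if it is independent and rigid. -/
def LCMinRigid {V Λ : Type*} [Fintype V] [DecidableEq V] (d : ℕ)
    (G : LoopedGraph V Λ) : Prop :=
  LCIndependent d G ∧ LCRigid d G

/-!
At a generic framework the rigidity matrix of `G` splits into the rows of `H`, extended by zero
from the coordinates of `W`, and the rows of the remainder `R` of `G` outside `H`. Since `H` is
minimally rigid, its rows are independent and span every vector supported on the coordinates of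
`W`; hence the rows of `G` are independent iff the rows of `R` are independent modulo the vectors
supported on `W`. The remainders of `G` and `G'` coincide, and this condition involves only the
positions of the vertices and the directions of the loops of `R`. A generic framework of `G`
restricts to one of `R`, and a generic framework of `R` extends to one of `G`, because over a
countable algebraically independent family of reals there are always finitely many further
independent ones (`ℝ` is uncountable).
-/

open Cardinal Function Set Submodule LoopedGraph

universe u v

theorem AlgebraicIndependent.exists_option_elim_real {ι : Type*} [Countable ι] {f : ι → ℝ}
    (hf : AlgebraicIndependent ℚ f) :
    ∃ x : ℝ, AlgebraicIndependent ℚ (fun o : Option ι => o.elim x f) := by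
  simp_rw [hf.option_iff_transcendental]
  set A := Algebra.adjoin ℚ (range f)
  have hA : #A ≤ ℵ₀ := by
    have := (countable_range f).to_subtype
    exact (Algebra.cardinalMk_adjoin_le ℚ _).trans (by simp [mk_le_aleph0])
  have hsmall : #{x : ℝ // IsAlgebraic A x} < #ℝ := by
    rw [mk_real]
    exact (Algebraic.cardinalMk_le_max A ℝ).trans_lt
      ((max_le hA le_rfl).trans_lt aleph0_lt_continuum)
  by_contra! h
  exact hsmall.not_ge (mk_le_of_injective (f := fun x => ⟨x, not_not.1 (h x)⟩)
    fun x y hxy => congrArg Subtype.val hxy)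

theorem AlgebraicIndependent.exists_sum_elim_real {κ : Type u} [Finite κ] :
    ∀ {ι : Type v} [Countable ι] {f : ι → ℝ}, AlgebraicIndependent ℚ f →
      ∃ g : κ → ℝ, AlgebraicIndependent ℚ (Sum.elim f g) := by
  induction κ using Finite.induction_empty_option with
  | of_equiv e ih =>
    intro ι _ f hf
    obtain ⟨g, hg⟩ := ih hf
    refine ⟨g ∘ e.symm, ?_⟩
    refine (algebraicIndependent_equiv' (Equiv.sumCongr (Equiv.refl ι) e) ?_).1 hg
    ext (i | a) <;> simp
  | h_empty =>
    intro ι _ f hf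
    exact ⟨PEmpty.elim,
      (algebraicIndependent_equiv' (Equiv.sumEmpty ι PEmpty.{u + 1}).symm rfl).1 hf⟩
  | @h_option κ _ ih =>
    intro ι _ f hf
    obtain ⟨g, hg⟩ := ih hf
    obtain ⟨x, hx⟩ := hg.exists_option_elim_real
    refine ⟨fun o => o.elim x g, (algebraicIndependent_equiv' ((Equiv.sumCongr (Equiv.refl ι)
      (Equiv.optionEquivSumPUnit.{u, u} κ)).trans ((Equiv.sumAssoc ι κ PUnit).symm.trans
      (Equiv.optionEquivSumPUnit _).symm)).symm ?_).1 hx⟩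
    ext (_ | i | k) <;> rfl

theorem GenericPQ.comp {V V' Λ Λ' : Type*} {d : ℕ} {p : V → Fin d → ℝ} {q : Λ → Fin d → ℝ}
    (h : GenericPQ d p q) {f : V' → V} {g : Λ' → Λ} (hf : Injective f) (hg : Injective g) :
    GenericPQ d (p ∘ f) (q ∘ g) := by
  have := AlgebraicIndependent.comp h _
    ((hf.prodMap injective_id).sumMap (hg.prodMap injective_id))
  rwa [Sum.elim_comp_map] at this

theorem GenericPQ.exists_sum_elim {V Λ₀ : Type*} (Λ₁ : Type*) [Countable V] [Countable Λ₀]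
    [Finite Λ₁] {d : ℕ} {p : V → Fin d → ℝ} {q₀ : Λ₀ → Fin d → ℝ} (h : GenericPQ d p q₀) :
    ∃ q₁ : Λ₁ → Fin d → ℝ, GenericPQ d p (Sum.elim q₁ q₀) := by
  obtain ⟨g, hg⟩ := AlgebraicIndependent.exists_sum_elim_real (κ := Λ₁ × Fin d) h
  refine ⟨fun j i => g (j, i), (algebraicIndependent_equiv' ((Equiv.sumAssoc _ _ _).trans
    (Equiv.sumCongr (Equiv.refl _) ((Equiv.sumComm _ _).trans
      (Equiv.sumProdDistrib _ _ _).symm))) ?_).1 hg⟩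
  ext ((x | y) | y) <;> rfl

theorem extend_prodMap_eq {V W : Type*} {d : ℕ} (φ : W ↪ V) {f : W × Fin d → ℝ}
    {g : V × Fin d → ℝ} (hφ : ∀ w i, g (φ w, i) = f (w, i))
    (h0 : ∀ v i, v ∉ range φ → g (v, i) = 0) :
    extend (Prod.map φ id) f 0 = g := by
  ext ⟨v, i⟩
  by_cases hv : v ∈ range φ
  · obtain ⟨w, rfl⟩ := hv
    exact ((φ.injective.prodMap injective_id).extend_apply f 0 (w, i)).trans (hφ w i).symm
  · rw [extend_apply' _ _ _ fun ⟨x, hx⟩ => hv ⟨x.1, congrArg Prod.fst hx⟩, h0 v i hv]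
    rfl

theorem Matrix.span_row_eq_top_of_rank_eq {m n K : Type*} [Field K] [Finite m] [Fintype n]
    {A : Matrix m n K} (h : A.rank = Fintype.card n) : span K (range A.row) = ⊤ :=
  Submodule.eq_top_of_finrank_eq <| by
    rw [← A.rank_eq_finrank_span_row, h, Module.finrank_fintype_fun_eq_card]

theorem SimpleGraph.map_subtype_adj {V : Type*} {W : Set V} (K : SimpleGraph W) (a b : V) :
    (K.map (Embedding.subtype (· ∈ W))).Adj a b ↔
      ∃ (ha : a ∈ W) (hb : b ∈ W), K.Adj ⟨a, ha⟩ ⟨b, hb⟩ := by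
  rw [SimpleGraph.map_adj]
  constructor
  · rintro ⟨⟨a, ha⟩, ⟨b, hb⟩, h, rfl, rfl⟩
    exact ⟨ha, hb, h⟩
  · rintro ⟨ha, hb, h⟩
    exact ⟨_, _, h, rfl, rfl⟩

section

variable {V W : Type*} [DecidableEq V] [DecidableEq W] {d : ℕ}

theorem edgeRow_sym2Map (φ : W ↪ V) (p : V → Fin d → ℝ) (e : Sym2 W) :
    edgeRow d p (φ.sym2Map e) = extend (Prod.map φ id) (edgeRow d (p ∘ φ) e) 0 := by
  induction e using Sym2.ind with
  | _ a b =>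
    refine (extend_prodMap_eq φ (fun w i => ?_) fun v i hv => ?_).symm
    · simp [edgeRow, φ.injective.eq_iff]
    · have hne : ∀ w, v ≠ φ w := fun w h => hv ⟨w, h.symm⟩
      simp [edgeRow, hne]

theorem loopRow_map (φ : W ↪ V) (w : W) (c : Fin d → ℝ) :
    (fun x : V × Fin d => if x.1 = φ w then c x.2 else 0) =
      extend (Prod.map φ id) (fun y : W × Fin d => if y.1 = w then c y.2 else 0) 0 := by
  refine (extend_prodMap_eq φ (fun w' i => ?_) fun v i hv => ?_).symm
  · simp [φ.injective.eq_iff]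
  · simp [show v ≠ φ w from fun h => hv ⟨w, h.symm⟩]

namespace LoopedGraph

variable {Λ₁ Λ₀ : Type*} (G : LoopedGraph V (Λ₁ ⊕ Λ₀)) (K : LoopedGraph W Λ₁) (φ : W ↪ V)

/-- The loops of `K` are the `Sum.inl` loops of `G`; only the `Sum.inr` loops remain. -/
def deleteCopy : LoopedGraph V Λ₀ where
  graph := G.graph \ K.graph.map φ
  loopAt j := G.loopAt (Sum.inr j)

variable {G K φ}

noncomputable def edgeSetEquivDeleteCopy (hsub : K.graph.map φ ≤ G.graph) :
    K.graph.edgeSet ⊕ (G.deleteCopy K φ).graph.edgeSet ≃ G.graph.edgeSet := by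
  classical
  have hdisj : Disjoint (K.graph.map φ).edgeSet (G.deleteCopy K φ).graph.edgeSet := by
    rw [deleteCopy, SimpleGraph.edgeSet_sdiff]
    exact Set.disjoint_sdiff_right
  have hunion : (K.graph.map φ).edgeSet ∪ (G.deleteCopy K φ).graph.edgeSet = G.graph.edgeSet := by
    rw [deleteCopy, SimpleGraph.edgeSet_sdiff,
      Set.union_sdiff_cancel (SimpleGraph.edgeSet_mono hsub)]
  exact (Equiv.sumCongr ((Equiv.Set.image _ _ φ.sym2Map.injective).trans
      (Equiv.setCongr (SimpleGraph.edgeSet_map φ K.graph).symm)) (Equiv.refl _)).trans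
    ((Equiv.Set.union hdisj).symm.trans (Equiv.setCongr hunion))

end LoopedGraph

/-- Independence of the rows in the quotient of `V × Fin d → ℝ` by the vectors supported on the
coordinates of `φ '' W`, for every generic framework. -/
def LCIndependentModulo {Λ : Type*} (d : ℕ) (φ : W ↪ V) (G : LoopedGraph V Λ) : Prop :=
  ∀ (p : V → Fin d → ℝ) (q : Λ → Fin d → ℝ), GenericPQ d p q →
    LinearIndependent ℝ (lcRigidityMatrix d G p q).row ∧
      Disjoint (LinearMap.range (ExtendByZero.linearMap ℝ (Prod.map φ id)))
        (span ℝ (range (lcRigidityMatrix d G p q).row))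

section Block

variable {Λ₁ Λ₀ : Type*} {G : LoopedGraph V (Λ₁ ⊕ Λ₀)} {K : LoopedGraph W Λ₁} {φ : W ↪ V}

theorem lcRigidityMatrix_row_comp_equiv (hsub : K.graph.map φ ≤ G.graph)
    (hloop : ∀ j, G.loopAt (Sum.inl j) = φ (K.loopAt j))
    (p : V → Fin d → ℝ) (q : Λ₁ ⊕ Λ₀ → Fin d → ℝ) :
    (lcRigidityMatrix d G p q).row ∘
        ((Equiv.sumSumSumComm _ _ _ _).trans
          (Equiv.sumCongr (edgeSetEquivDeleteCopy hsub) (Equiv.refl _))) =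
      Sum.elim (ExtendByZero.linearMap ℝ (Prod.map φ id) ∘
          (lcRigidityMatrix d K (p ∘ φ) (q ∘ Sum.inl)).row)
        (lcRigidityMatrix d (G.deleteCopy K φ) p (q ∘ Sum.inr)).row := by
  funext r
  rcases r with (e | j) | (e | j)
  · exact edgeRow_sym2Map φ p e
  · show (fun x : V × Fin d => if x.1 = G.loopAt (Sum.inl j) then q (Sum.inl j) x.2 else 0) = _
    rw [hloop]
    exact loopRow_map φ (K.loopAt j) (q (Sum.inl j))
  · rfl
  · rfl

theorem linearIndependent_row_iff_deleteCopy [Fintype W] [Finite Λ₁]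
    (hK : LCMinRigid d K) (hsub : K.graph.map φ ≤ G.graph)
    (hloop : ∀ j, G.loopAt (Sum.inl j) = φ (K.loopAt j))
    {p : V → Fin d → ℝ} {q : Λ₁ ⊕ Λ₀ → Fin d → ℝ} (hgen : GenericPQ d p q) :
    LinearIndependent ℝ (lcRigidityMatrix d G p q).row ↔
      LinearIndependent ℝ (lcRigidityMatrix d (G.deleteCopy K φ) p (q ∘ Sum.inr)).row ∧
        Disjoint (LinearMap.range (ExtendByZero.linearMap ℝ (Prod.map φ id)))
          (span ℝ (range (lcRigidityMatrix d (G.deleteCopy K φ) p (q ∘ Sum.inr)).row)) := by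
  have hgenK := hgen.comp φ.injective Sum.inl_injective
  have hKspan : span ℝ (range (lcRigidityMatrix d K (p ∘ φ) (q ∘ Sum.inl)).row) = ⊤ := by
    refine Matrix.span_row_eq_top_of_rank_eq ?_
    rw [hK.2 _ _ hgenK, Fintype.card_prod, Fintype.card_fin, mul_comm]
  rw [← linearIndependent_equiv _, lcRigidityMatrix_row_comp_equiv hsub hloop,
    linearIndependent_sum, Sum.elim_comp_inl, Sum.elim_comp_inr]
  set E := ExtendByZero.linearMap ℝ (Prod.map φ (id : Fin d → Fin d))
  have hE : LinearMap.ker E = ⊥ := LinearMap.ker_eq_bot.2 fun f g hfg => funext fun x => by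
    simpa [E, (φ.injective.prodMap injective_id).extend_apply] using
      congrFun hfg (Prod.map φ id x)
  rw [range_comp, ← Submodule.map_span, hKspan, Submodule.map_top]
  exact and_iff_right ((hK.1 _ _ hgenK).map' E hE)

theorem lcIndependent_iff_deleteCopy [Countable V] [Fintype W] [Finite Λ₁] [Countable Λ₀]
    (hK : LCMinRigid d K) (hsub : K.graph.map φ ≤ G.graph)
    (hloop : ∀ j, G.loopAt (Sum.inl j) = φ (K.loopAt j)) :
    LCIndependent d G ↔ LCIndependentModulo d φ (G.deleteCopy K φ) := by
  constructor
  · intro hG p q₀ hgen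
    obtain ⟨q₁, hgen'⟩ := hgen.exists_sum_elim Λ₁
    exact (linearIndependent_row_iff_deleteCopy hK hsub hloop hgen').1 (hG p _ hgen')
  · intro hR p q hgen
    exact (linearIndependent_row_iff_deleteCopy hK hsub hloop hgen).2
      (hR p _ (hgen.comp injective_id Sum.inr_injective))

end Block

end

theorem minRigid_replacement_independent_general {V : Type} [Fintype V] [DecidableEq V]
    {Λ₀ Λ₁ Λ₂ : Type} [Fintype Λ₀] [Fintype Λ₁] [Fintype Λ₂]
    (d : ℕ) (W : Set V) [Fintype ↥W]
    (H : LoopedGraph ↥W Λ₁) (H' : LoopedGraph ↥W Λ₂)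
    (hHmin : LCMinRigid d H) (hH'min : LCMinRigid d H')
    (G : LoopedGraph V (Λ₁ ⊕ Λ₀)) (G' : LoopedGraph V (Λ₂ ⊕ Λ₀))
    (hHsub : ∀ a b : ↥W, H.graph.Adj a b → G.graph.Adj a.1 b.1)
    (hGloop : ∀ j : Λ₁, G.loopAt (Sum.inl j) = (H.loopAt j).1)
    (hG'adj : ∀ a b : V, G'.graph.Adj a b ↔
        ((G.graph.Adj a b ∧
            ¬ ∃ (ha : a ∈ W) (hb : b ∈ W), H.graph.Adj ⟨a, ha⟩ ⟨b, hb⟩) ∨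
          (∃ (ha : a ∈ W) (hb : b ∈ W), H'.graph.Adj ⟨a, ha⟩ ⟨b, hb⟩)))
    (hG'loop₁ : ∀ j : Λ₂, G'.loopAt (Sum.inl j) = (H'.loopAt j).1)
    (hG'loop₀ : ∀ j : Λ₀, G'.loopAt (Sum.inr j) = G.loopAt (Sum.inr j))
    (hnopar : ∀ a b : ↥W, H'.graph.Adj a b → G.graph.Adj a.1 b.1 → H.graph.Adj a b) :
    LCIndependent d G ↔ LCIndependent d G' := by
  set φ := Embedding.subtype (· ∈ W)
  have hsub : H.graph.map φ ≤ G.graph := (SimpleGraph.map_le_iff_le_comap _ _ _).2 hHsub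
  have hsub' : H'.graph.map φ ≤ G'.graph := (SimpleGraph.map_le_iff_le_comap _ _ _).2
    fun a b h => (hG'adj a b).2 (Or.inr ⟨a.2, b.2, h⟩)
  rw [lcIndependent_iff_deleteCopy hHmin hsub hGloop,
    lcIndependent_iff_deleteCopy hH'min hsub' hG'loop₁]
  suffices G.deleteCopy H φ = G'.deleteCopy H' φ by rw [this]
  have hgraph : G.graph \ H.graph.map φ = G'.graph \ H'.graph.map φ := by
    ext a b
    simp only [SimpleGraph.sdiff_adj, φ, SimpleGraph.map_subtype_adj, hG'adj]
    have := fun ha hb => hnopar ⟨a, ha⟩ ⟨b, hb⟩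
    grind
  simp only [deleteCopy, hgraph, hG'loop₀]

/-- Replacing a minimally rigid subgraph `H` of `G` on a vertex set
`W` by another minimally rigid looped simple graph `H'` on the same vertex set (without
creating parallel edges or repeated loops) does not change independence in `ℝ^d`. -/
theorem minRigid_replacement_independent {V : Type} [Fintype V] [DecidableEq V]
    {Λ₀ Λ₁ Λ₂ : Type} [Fintype Λ₀] [Fintype Λ₁] [Fintype Λ₂]
    (d : ℕ) (hd : 1 ≤ d) (W : Set V) [Fintype ↥W]
    (H : LoopedGraph ↥W Λ₁) (H' : LoopedGraph ↥W Λ₂)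
    (hHmin : LCMinRigid d H) (hH'min : LCMinRigid d H')
    (G : LoopedGraph V (Λ₁ ⊕ Λ₀)) (G' : LoopedGraph V (Λ₂ ⊕ Λ₀))
    (hHsub : ∀ a b : ↥W, H.graph.Adj a b → G.graph.Adj a.1 b.1)
    (hGloop : ∀ j : Λ₁, G.loopAt (Sum.inl j) = (H.loopAt j).1)
    (hG'adj : ∀ a b : V, G'.graph.Adj a b ↔
        ((G.graph.Adj a b ∧
            ¬ ∃ (ha : a ∈ W) (hb : b ∈ W), H.graph.Adj ⟨a, ha⟩ ⟨b, hb⟩) ∨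
          (∃ (ha : a ∈ W) (hb : b ∈ W), H'.graph.Adj ⟨a, ha⟩ ⟨b, hb⟩)))
    (hG'loop₁ : ∀ j : Λ₂, G'.loopAt (Sum.inl j) = (H'.loopAt j).1)
    (hG'loop₀ : ∀ j : Λ₀, G'.loopAt (Sum.inr j) = G.loopAt (Sum.inr j))
    (hnopar : ∀ a b : ↥W, H'.graph.Adj a b → G.graph.Adj a.1 b.1 → H.graph.Adj a b) :
    LCIndependent d G ↔ LCIndependent d G' :=
  minRigid_replacement_independent_general d W H H' hHmin hH'min G G' hHsub hGloop hG'adj hG'loop₁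
    hG'loop₀ hnopar
end
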